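/- arXiv:2012.07621 — 3 statements merged into one kernel-verified Lean document; each statement's English description precedes it below -/
import Mathlib

section
/- Let (M, ρ) be a nonempty compact metric space, let X ⊆ M be a nonempty finite subset, and let d' be any metric on the set X (not necessarily related to ρ). Then the Gromov–Hausdorff distance between the compact metric spaces (M, ρ) and (X, d') satisfies d_GH((M,ρ), (X,d')) ≤ (1/2) · max_{x,y ∈ X} |ρ(x,y) − d'(x,y)| + sup_{z ∈ M} min_{x ∈ X} ρ(z,x). -/
/-- For a nonempty compact metric space `M`, a nonempty finite subset
(modelled by an injective map `f : X → M` from a finite nonempty metric space `X`,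
whose own metric `dist` plays the role of the arbitrary metric `d'`), the
Gromov–Hausdorff distance satisfies
`d_GH(M, X) ≤ (1/2) · max_{x,y ∈ X} |ρ(f x, f y) − d'(x,y)| + sup_{z ∈ M} min_{x ∈ X} ρ(z, f x)`. -/
theorem gh_dist_bound_finite_subset
    (M : Type) [MetricSpace M] [CompactSpace M] [Nonempty M]
    (X : Type) [MetricSpace X] [Fintype X] [Nonempty X]
    (f : X → M) (hf : Function.Injective f) :
    GromovHausdorff.ghDist M X ≤
      (1 / 2) * (⨆ q : X × X, |dist (f q.1) (f q.2) - dist q.1 q.2|) +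
        ⨆ z : M, Metric.infDist z (Set.range f) := by
  set s : Set M := Set.range f with hs_def
  have hsne : s.Nonempty := Set.range_nonempty f
  have hscomp : IsCompact s := (Set.finite_range f).isCompact
  set ε₁ : ℝ := ⨆ z : M, Metric.infDist z s with hε₁
  set ε₂ : ℝ := ⨆ q : X × X, |dist (f q.1) (f q.2) - dist q.1 q.2| with hε₂
  have hbdd1 : BddAbove (Set.range fun z : M => Metric.infDist z s) :=
    (isCompact_univ.image_of_continuousOn
      ((Metric.continuous_infDist_pt s).continuousOn)).bddAbove.mono
      (by rw [Set.image_univ])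
  have hbdd2 : BddAbove (Set.range fun q : X × X =>
      |dist (f q.1) (f q.2) - dist q.1 q.2|) := Set.Finite.bddAbove (Set.finite_range _)
  let Φ : s → X := fun p => (Equiv.ofInjective f hf).symm p
  have hΦ : ∀ p : s, f (Φ p) = p := fun p => by
    exact Subtype.ext_iff.mp ((Equiv.ofInjective f hf).apply_symm_apply p)
  have key : GromovHausdorff.ghDist M X ≤ ε₁ + ε₂ / 2 + 0 := by
    apply GromovHausdorff.ghDist_le_of_approx_subsets Φ
    · intro x
      obtain ⟨y, hy, hdy⟩ := hscomp.exists_infDist_eq_dist hsne x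
      exact ⟨y, hy, by rw [← hdy]; exact le_ciSup hbdd1 x⟩
    · intro x
      refine ⟨⟨f x, Set.mem_range_self x⟩, ?_⟩
      have : Φ ⟨f x, Set.mem_range_self x⟩ = x := hf (hΦ _)
      simp [this]
    · intro p q
      have h1 : dist p q = dist (f (Φ p)) (f (Φ q)) := by rw [hΦ, hΦ]; rfl
      rw [h1]
      exact le_ciSup hbdd2 (Φ p, Φ q)
  calc GromovHausdorff.ghDist M X ≤ ε₁ + ε₂ / 2 + 0 := key
    _ = (1/2) * ε₂ + ε₁ := by ring
end

section
/- Let (M, ρ) be a compact metric space and μ a Borel probability measure on M. Suppose there exist constants c > 0, r₀ > 0 and a real number d ≥ 1 such that μ(B(x,r)) ≥ c·r^d for every x ∈ M and every 0 < r < r₀, where B(x,r) denotes the open ball of radius r around x. Fix κ ∈ (0,1). Then there exist θ > 0 and n₀ ∈ ℕ such that for every n ≥ n₀, if X₁, …, X_n are independent M-valued random variables each with law μ, then P( sup_{x ∈ M} ρ(x, {X₁,…,X_n}) ≥ n^{(κ−1)/d} ) ≤ exp(−θ·n^κ), where ρ(x, A) = min_{a ∈ A} ρ(x,a) denotes the distance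 from a point to a finite set. -/
/-!
Put `ε = n ^ ((κ - 1) / d)` and `r = ε / 4`. A maximal `2r`-separated set `s ⊆ M` is a `2r`-net,
and the balls of radius `r` around its points are disjoint, so `#s ≤ 1 / (c r^d)`. If each of these
balls contains a sample point, every point of `M` lies within `3r < ε` of the sample. One ball, of
measure at least `c r^d = (c / 4^d) n^(κ-1)`, is missed by all `n` independent samples with
probability at most `exp (-(c / 4^d) n^κ)`; the union bound over `s` costs the factor `(4^d / c)
n^(1-κ)`, which is absorbed for large `n` by halving the exponent.
-/

open MeasureTheory ProbabilityTheory Metric Set Filter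
open scoped ENNReal NNReal

namespace Metric

variable {X : Type*}

lemma packingNumber_ne_top_of_isCompact [PseudoEMetricSpace X] {ε : ℝ≥0} (hε : ε ≠ 0)
    {A : Set X} (hA : IsCompact A) : packingNumber ε A ≠ ⊤ := by
  obtain ⟨C, -, hC, hcover⟩ := exists_finite_isCover_of_isCompact (ε := ε / 2) (by simpa) hA
  refine ne_top_of_le_ne_top hC.encard_lt_top.ne ?_
  calc packingNumber ε A = packingNumber (2 * (ε / 2)) A := by
        rw [mul_div_cancel₀ _ two_ne_zero]
    _ ≤ externalCoveringNumber (ε / 2) A := packingNumber_two_mul_le_externalCoveringNumber _ _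
    _ ≤ C.encard := hcover.externalCoveringNumber_le_encard

lemma exists_finset_isSeparated_isCover [PseudoEMetricSpace X] [CompactSpace X] {ε : ℝ≥0}
    (hε : ε ≠ 0) :
    ∃ s : Finset X, IsSeparated ε (s : Set X) ∧ IsCover ε univ (s : Set X) := by
  have hpack := packingNumber_ne_top_of_isCompact hε (isCompact_univ (X := X))
  have hfin : (maximalSeparatedSet ε (univ : Set X)).Finite := by
    rw [← Set.encard_ne_top_iff, encard_maximalSeparatedSet hpack]
    exact hpack
  refine ⟨hfin.toFinset, ?_, ?_⟩ <;> rw [hfin.coe_toFinset]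
  exacts [isSeparated_maximalSeparatedSet, isCover_maximalSeparatedSet hpack]

lemma IsSeparated.card_mul_le_measure_univ [PseudoMetricSpace X] [MeasurableSpace X]
    [OpensMeasurableSpace X] (μ : Measure X) {s : Finset X} {r : ℝ≥0}
    (hs : IsSeparated (2 * r : ℝ≥0) (s : Set X)) {m : ℝ≥0∞}
    (hm : ∀ y ∈ s, m ≤ μ (ball y r)) :
    s.card * m ≤ μ univ := by
  have hdisj : (s : Set X).PairwiseDisjoint fun y => ball y r := by
    intro a ha b hb hab
    have hr : 2 * r < nndist a b := by
      simpa only [edist_nndist, ENNReal.coe_lt_coe] using hs ha hb hab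
    exact ball_disjoint_ball (by rw [← two_mul, dist_nndist]; exact_mod_cast hr.le)
  calc s.card * m = ∑ y ∈ s, m := by rw [Finset.sum_const, nsmul_eq_mul]
    _ ≤ ∑ y ∈ s, μ (ball y r) := Finset.sum_le_sum hm
    _ = μ (⋃ y ∈ s, ball y r) :=
      (measure_biUnion_finset hdisj fun _ _ => measurableSet_ball).symm
    _ ≤ μ univ := measure_mono (subset_univ _)

lemma iSup_infDist_le_of_isCover [PseudoMetricSpace X] {s : Set X} {δ : ℝ≥0}
    (hs : IsCover δ univ s) {A : Set X} {r : ℝ} (hr : 0 ≤ r)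
    (hA : ∀ y ∈ s, ∃ a ∈ A, dist a y < r) : ⨆ x, infDist x A ≤ δ + r := by
  refine Real.iSup_le (fun x => ?_) (by positivity)
  obtain ⟨y, hy, hxy⟩ := hs (mem_univ x)
  obtain ⟨a, ha, hay⟩ := hA y hy
  have hxy : dist x y ≤ δ := NNReal.coe_le_coe.mpr (edist_le_coe.mp hxy)
  calc infDist x A ≤ dist x a := infDist_le_dist_of_mem ha
    _ ≤ dist x y + dist a y := dist_triangle_right _ _ _
    _ ≤ δ + r := by linarith

end Metric

namespace ENNReal

lemma one_sub_pow_le_ofReal_exp {m : ℝ≥0∞} {p : ℝ} (hp : 0 ≤ p)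
    (hm : ENNReal.ofReal p ≤ m) (n : ℕ) : (1 - m) ^ n ≤ ENNReal.ofReal (Real.exp (-(n * p))) := by
  have h : 1 - m ≤ ENNReal.ofReal (Real.exp (-p)) :=
    calc 1 - m ≤ 1 - ENNReal.ofReal p := tsub_le_tsub_left hm 1
      _ = ENNReal.ofReal (1 - p) := by rw [ofReal_sub _ hp, ofReal_one]
      _ ≤ ENNReal.ofReal (Real.exp (-p)) := ofReal_le_ofReal (Real.one_sub_le_exp_neg p)
  calc (1 - m) ^ n ≤ ENNReal.ofReal (Real.exp (-p)) ^ n := pow_le_pow_left₀ zero_le h n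
    _ = ENNReal.ofReal (Real.exp (-(n * p))) := by
      rw [← ofReal_pow (Real.exp_nonneg _), ← Real.exp_nat_mul, mul_neg]

end ENNReal

namespace ProbabilityTheory

variable {Ω M ι : Type*} [MeasurableSpace Ω] [MeasurableSpace M] [Fintype ι]
  {P : Measure Ω} {μ : Measure M} [IsProbabilityMeasure μ] {X : ι → Ω → M}

lemma iIndepFun.measure_iInter_preimage_compl (hind : iIndepFun X P)
    (hX : ∀ i, Measurable (X i)) (hlaw : ∀ i, P.map (X i) = μ) {B : Set M}
    (hB : MeasurableSet B) :
    P (⋂ i, X i ⁻¹' Bᶜ) = (1 - μ B) ^ Fintype.card ι := by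
  rw [hind.meas_iInter fun i => ⟨Bᶜ, hB.compl, rfl⟩]
  simp_rw [← Measure.map_apply (hX _) hB.compl, hlaw, prob_compl_eq_one_sub hB]
  rw [Finset.prod_const, Finset.card_univ]

lemma iIndepFun.measure_lt_iSup_infDist_le [PseudoMetricSpace M] [OpensMeasurableSpace M]
    (hind : iIndepFun X P) (hX : ∀ i, Measurable (X i)) (hlaw : ∀ i, P.map (X i) = μ)
    {s : Finset M} {δ : ℝ≥0} (hs : IsCover δ univ (s : Set M)) {r p : ℝ} (hr : 0 ≤ r)
    (hp : 0 ≤ p) (hball : ∀ y ∈ s, ENNReal.ofReal p ≤ μ (ball y r)) :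
    P {ω | δ + r < ⨆ x, infDist x (range fun i => X i ω)} ≤
      s.card * ENNReal.ofReal (Real.exp (-(Fintype.card ι * p))) := by
  have hsub : {ω | δ + r < ⨆ x, infDist x (range fun i => X i ω)} ⊆
      ⋃ y ∈ s, ⋂ i, X i ⁻¹' (ball y r)ᶜ := by
    intro ω hω
    by_contra hmiss
    simp only [mem_iUnion, mem_iInter, mem_preimage, mem_compl_iff, not_exists, not_forall,
      not_not] at hmiss
    refine (iSup_infDist_le_of_isCover hs hr fun y hy => ?_).not_gt hω
    obtain ⟨i, hi⟩ := hmiss y hy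
    exact ⟨X i ω, mem_range_self i, hi⟩
  calc P {ω | δ + r < ⨆ x, infDist x (range fun i => X i ω)}
      ≤ ∑ y ∈ s, P (⋂ i, X i ⁻¹' (ball y r)ᶜ) :=
        (measure_mono hsub).trans (measure_biUnion_finset_le _ _)
    _ = ∑ y ∈ s, (1 - μ (ball y r)) ^ Fintype.card ι := by
      simp_rw [hind.measure_iInter_preimage_compl hX hlaw measurableSet_ball]
    _ ≤ ∑ y ∈ s, ENNReal.ofReal (Real.exp (-(Fintype.card ι * p))) :=
      Finset.sum_le_sum fun y hy => ENNReal.one_sub_pow_le_ofReal_exp hp (hball y hy) _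
    _ = s.card * ENNReal.ofReal (Real.exp (-(Fintype.card ι * p))) := by
      rw [Finset.sum_const, nsmul_eq_mul]

lemma iIndepFun.measure_three_mul_lt_iSup_infDist_le [MetricSpace M] [CompactSpace M]
    [OpensMeasurableSpace M] (hind : iIndepFun X P) (hX : ∀ i, Measurable (X i))
    (hlaw : ∀ i, P.map (X i) = μ) {r q : ℝ} (hr : 0 < r) (hq : 0 < q)
    (hball : ∀ y, ENNReal.ofReal q ≤ μ (ball y r)) :
    P {ω | 3 * r < ⨆ x, infDist x (range fun i => X i ω)} ≤
      ENNReal.ofReal (q⁻¹ * Real.exp (-(Fintype.card ι * q))) := by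
  lift r to ℝ≥0 using hr.le
  obtain ⟨s, hsep, hcov⟩ := exists_finset_isSeparated_isCover (X := M) (ε := 2 * r)
    (mul_pos two_pos (NNReal.coe_pos.mp hr)).ne'
  have hcard : (s.card : ℝ) ≤ q⁻¹ := by
    have h := hsep.card_mul_le_measure_univ μ fun y _ => hball y
    rw [measure_univ, ← ENNReal.ofReal_natCast, ← ENNReal.ofReal_mul (by positivity),
      ENNReal.ofReal_le_one] at h
    rw [← one_div]
    exact (le_div_iff₀ hq).mpr h
  have h3r : (3 * r : ℝ) = (2 * r : ℝ≥0) + r := by push_cast; ring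
  calc P {ω | 3 * r < ⨆ x, infDist x (range fun i => X i ω)}
      ≤ s.card * ENNReal.ofReal (Real.exp (-(Fintype.card ι * q))) := by
        rw [h3r]
        exact hind.measure_lt_iSup_infDist_le hX hlaw hcov r.2 hq.le fun y _ => hball y
    _ = ENNReal.ofReal (s.card * Real.exp (-(Fintype.card ι * q))) := by
        rw [ENNReal.ofReal_mul (by positivity), ENNReal.ofReal_natCast]
    _ ≤ ENNReal.ofReal (q⁻¹ * Real.exp (-(Fintype.card ι * q))) :=
        ENNReal.ofReal_le_ofReal (mul_le_mul_of_nonneg_right hcard (Real.exp_nonneg _))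

end ProbabilityTheory

lemma eventually_mul_rpow_le_exp_mul_rpow (K p : ℝ) {θ κ : ℝ} (hθ : 0 < θ) (hκ : 0 < κ) :
    ∀ᶠ x in atTop, K * x ^ p ≤ Real.exp (θ * x ^ κ) := by
  have h := ((isLittleO_rpow_exp_pos_mul_atTop (p / κ) hθ).comp_tendsto
    (tendsto_rpow_atTop hκ)).const_mul_left K
  filter_upwards [h.eventuallyLE, eventually_ge_atTop 0] with x hx hx₀
  simp only [Function.comp_apply, ← Real.rpow_mul hx₀, mul_div_cancel₀ _ hκ.ne',
    Real.norm_eq_abs, Real.abs_exp] at hx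
  exact (le_abs_self _).trans hx

lemma eventually_inv_mul_exp_neg_le_exp_neg_half {a κ : ℝ} (ha : 0 < a) (hκ : 0 < κ) :
    ∀ᶠ x in atTop, (a * x ^ (κ - 1))⁻¹ * Real.exp (-(x * (a * x ^ (κ - 1)))) ≤
      Real.exp (-(a / 2) * x ^ κ) := by
  filter_upwards [eventually_mul_rpow_le_exp_mul_rpow a⁻¹ (1 - κ) (half_pos ha) hκ,
    eventually_gt_atTop 0] with x hx hx₀
  rw [mul_inv, ← Real.rpow_neg hx₀.le, neg_sub, mul_left_comm,
    ← Real.rpow_one_add' hx₀.le (by linarith), add_sub_cancel]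
  calc a⁻¹ * x ^ (1 - κ) * Real.exp (-(a * x ^ κ))
      ≤ Real.exp (a / 2 * x ^ κ) * Real.exp (-(a * x ^ κ)) := by gcongr
    _ = Real.exp (-(a / 2) * x ^ κ) := by rw [← Real.exp_add]; ring_nf

/-- spacing lemma for metric measure spaces. If `μ(B(x,r)) ≥ c·r^d` for all
`x ∈ M` and `0 < r < r₀`, then for fixed `κ ∈ (0,1)` there are `θ > 0` and `n₀` such that
for all `n ≥ n₀` and every i.i.d. sample `X₁,…,Xₙ` from `μ`, the probability that the
sample fails to be `n^((κ-1)/d)`-dense in `M` is at most `exp(-θ·n^κ)`. -/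
theorem spacing_lemma
    (M : Type) [MetricSpace M] [CompactSpace M]
    [MeasurableSpace M] [BorelSpace M]
    (μ : Measure M) [IsProbabilityMeasure μ]
    (c r₀ d : ℝ) (hc : 0 < c) (hr₀ : 0 < r₀) (hd : 1 ≤ d)
    (hball : ∀ x : M, ∀ r : ℝ, 0 < r → r < r₀ →
      ENNReal.ofReal (c * r ^ d) ≤ μ (Metric.ball x r))
    (κ : ℝ) (hκ₀ : 0 < κ) (hκ₁ : κ < 1) :
    ∃ θ : ℝ, 0 < θ ∧ ∃ n₀ : ℕ, ∀ n : ℕ, n₀ ≤ n →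
      ∀ (Ω : Type) (_ : MeasureSpace Ω) (_ : IsProbabilityMeasure (ℙ : Measure Ω))
        (X : Fin n → Ω → M),
        (∀ i, Measurable (X i)) →
        (∀ i, (ℙ : Measure Ω).map (X i) = μ) →
        iIndepFun X (ℙ : Measure Ω) →
        (ℙ : Measure Ω) {ω : Ω |
            (n : ℝ) ^ ((κ - 1) / d) ≤
              ⨆ x : M, Metric.infDist x (Set.range fun i => X i ω)} ≤
          ENNReal.ofReal (Real.exp (-θ * (n : ℝ) ^ κ)) := by
  have hd₀ : 0 < d := by linarith
  set a := c / 4 ^ d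
  have ha : 0 < a := by positivity
  refine ⟨a / 2, by positivity, ?_⟩
  have hsmall : ∀ᶠ x : ℝ in atTop, x ^ ((κ - 1) / d) < 4 * r₀ := by
    have h := tendsto_rpow_neg_atTop (y := (1 - κ) / d) (by bound)
    rw [← neg_div, neg_sub] at h
    exact h.eventually_lt_const (by positivity)
  obtain ⟨n₀, hn₀⟩ := eventually_atTop.mp <| (tendsto_natCast_atTop_atTop.eventually
    (hsmall.and (eventually_inv_mul_exp_neg_le_exp_neg_half ha hκ₀))).and (eventually_gt_atTop 0)
  refine ⟨n₀, fun n hn₀n Ω _ _ X hXm hXlaw hXind => ?_⟩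
  obtain ⟨⟨hε, habsorb⟩, hn⟩ := hn₀ n hn₀n
  have hn : (0 : ℝ) < n := Nat.cast_pos.mpr hn
  set ε := (n : ℝ) ^ ((κ - 1) / d)
  have hq : c * (ε / 4) ^ d = a * n ^ (κ - 1) := by
    rw [Real.div_rpow (by positivity) (by norm_num), ← Real.rpow_mul hn.le,
      div_mul_cancel₀ _ hd₀.ne']
    ring
  have h3ε : 3 * (ε / 4) < ε := by linarith [show 0 < ε by positivity]
  calc _ ≤ ℙ {ω | 3 * (ε / 4) < ⨆ x, infDist x (range fun i => X i ω)} :=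
        measure_mono fun ω hω => h3ε.trans_le hω
    _ ≤ ENNReal.ofReal ((a * n ^ (κ - 1))⁻¹ *
          Real.exp (-(Fintype.card (Fin n) * (a * n ^ (κ - 1))))) :=
        hXind.measure_three_mul_lt_iSup_infDist_le hXm hXlaw (by positivity) (by positivity)
          fun y => hq ▸ hball y _ (by positivity) (by linarith)
    _ ≤ ENNReal.ofReal (Real.exp (-(a / 2) * n ^ κ)) := by
      rw [Fintype.card_fin]
      exact ENNReal.ofReal_le_ofReal habsorb
end

section
/- Let X and Y be finite, nonempty, disjoint subsets of ℝ^D, let p ≥ 1, and set δ = min{κ(Y), d_E(X,Y)}. Then for every pair of distinct points y, y' ∈ Y, the sample Fermat distance satisfies d_{X∪Y,p}(y,y') ≥ δ^p. -/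
/-- The cost of a polygonal path given by the list `l` of its vertices:
the sum over consecutive pairs of the `p`-th power of the Euclidean distance. -/
noncomputable def chainCost {D : ℕ} (p : ℝ) (l : List (EuclideanSpace ℝ (Fin D))) : ℝ :=
  ((l.zip l.tail).map (fun q => dist q.1 q.2 ^ p)).sum

/-- The sample Fermat distance: `d_{S,p}(x,y)` is the infimum over all finite paths
`x = x₀, x₁, …, x_{r+1} = y` with interior points `x₁,…,x_r ∈ S` of
`Σ_{i=0}^{r} |x_{i+1} − x_i|^p`. -/
noncomputable def fermatDist {D : ℕ} (p : ℝ) (S : Finset (EuclideanSpace ℝ (Fin D)))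
    (x y : EuclideanSpace ℝ (Fin D)) : ℝ :=
  sInf {c : ℝ | ∃ l : List (EuclideanSpace ℝ (Fin D)),
    (∀ z ∈ l, z ∈ S) ∧ c = chainCost p (x :: (l ++ [y]))}

/-- The Euclidean distance `d_E(A,B) = min_{a ∈ A, b ∈ B} |a − b|` between finite sets. -/
noncomputable def setDistE {D : ℕ} (A B : Finset (EuclideanSpace ℝ (Fin D))) : ℝ :=
  sInf {d : ℝ | ∃ a ∈ A, ∃ b ∈ B, d = dist a b}

/-- The minimal spacing `κ(B) = min_{b ∈ B} d_E({b}, B∖{b})` of a finite set. -/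
noncomputable def minSpacing {D : ℕ} (B : Finset (EuclideanSpace ℝ (Fin D))) : ℝ :=
  sInf {d : ℝ | ∃ b ∈ B, ∃ b' ∈ B, b ≠ b' ∧ d = dist b b'}
noncomputable instance {D : ℕ} : DecidableEq (EuclideanSpace ℝ (Fin D)) := Classical.decEq _

lemma chainCost_nonneg {D : ℕ} (p : ℝ) (l : List (EuclideanSpace ℝ (Fin D))) :
    0 ≤ chainCost p l := by
  apply List.sum_nonneg
  intro x hx
  simp only [List.mem_map] at hx
  obtain ⟨q, -, rfl⟩ := hx
  exact Real.rpow_nonneg dist_nonneg _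

lemma chainCost_cons_cons {D : ℕ} (p : ℝ) (a b : EuclideanSpace ℝ (Fin D))
    (l : List (EuclideanSpace ℝ (Fin D))) :
    chainCost p (a :: b :: l) = dist a b ^ p + chainCost p (b :: l) := by
  simp [chainCost]

/-- for disjoint finite nonempty sets `X, Y ⊆ ℝ^D` and
`δ = min{κ(Y), d_E(X,Y)}`, any two distinct points of `Y` are at sample Fermat distance
(in `X ∪ Y`) at least `δ^p`. -/
theorem fermatDist_outliers_ge {D : ℕ} (p : ℝ) (hp : 1 ≤ p)
    (X Y : Finset (EuclideanSpace ℝ (Fin D)))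
    (hX : X.Nonempty) (hY : Y.Nonempty) (hdisj : Disjoint X Y)
    (y y' : EuclideanSpace ℝ (Fin D)) (hy : y ∈ Y) (hy' : y' ∈ Y) (hne : y ≠ y') :
    min (minSpacing Y) (setDistE X Y) ^ p ≤ fermatDist p (X ∪ Y) y y' := by
  set δ := min (minSpacing Y) (setDistE X Y) with hδ
  have hδ0 : 0 ≤ δ := by
    apply le_min
    · apply Real.sInf_nonneg
      rintro d ⟨b, -, b', -, -, rfl⟩
      exact dist_nonneg
    · apply Real.sInf_nonneg
      rintro d ⟨a, -, b, -, rfl⟩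
      exact dist_nonneg
  -- minSpacing bound
  have hκ : ∀ b ∈ Y, ∀ b' ∈ Y, b ≠ b' → δ ≤ dist b b' := by
    intro b hb b' hb' hbb'
    refine le_trans (min_le_left _ _) (csInf_le ⟨0, ?_⟩ ⟨b, hb, b', hb', hbb', rfl⟩)
    rintro d ⟨c, -, c', -, -, rfl⟩
    exact dist_nonneg
  -- set distance bound
  have hd : ∀ a ∈ X, ∀ b ∈ Y, δ ≤ dist a b := by
    intro a ha b hb
    refine le_trans (min_le_right _ _) (csInf_le ⟨0, ?_⟩ ⟨a, ha, b, hb, rfl⟩)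
    rintro d ⟨c, -, c', -, rfl⟩
    exact dist_nonneg
  -- key chain lemma
  have key : ∀ l : List (EuclideanSpace ℝ (Fin D)), (∀ z ∈ l, z ∈ X ∪ Y) →
      ∀ a ∈ Y, a ≠ y' → δ ^ p ≤ chainCost p (a :: (l ++ [y'])) := by
    intro l
    induction l with
    | nil =>
      intro _ a ha hay'
      have : δ ≤ dist a y' := hκ a ha y' hy' hay'
      have := Real.rpow_le_rpow hδ0 this (le_trans zero_le_one hp)
      simpa [chainCost] using this
    | cons b l ih =>
      intro hl a ha hay'
      have hb : b ∈ X ∪ Y := hl b (by simp)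
      rw [List.cons_append, chainCost_cons_cons]
      rcases Finset.mem_union.mp hb with hbX | hbY
      · -- step Y → X
        have h1 : δ ≤ dist a b := by rw [dist_comm]; exact hd b hbX a ha
        have h2 := Real.rpow_le_rpow hδ0 h1 (le_trans zero_le_one hp)
        have h3 := chainCost_nonneg p (b :: (l ++ [y']))
        linarith
      · by_cases hab : a = b
        · -- zero step, recurse
          subst hab
          have := ih (fun z hz => hl z (by simp [hz])) a hbY hay'
          have h3 : 0 ≤ dist a a ^ p := Real.rpow_nonneg dist_nonneg _
          linarith
        · -- step between distinct points of Y
          have h1 : δ ≤ dist a b := hκ a ha b hbY hab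
          have h2 := Real.rpow_le_rpow hδ0 h1 (le_trans zero_le_one hp)
          have h3 := chainCost_nonneg p (b :: (l ++ [y']))
          linarith
  -- conclude
  refine le_csInf ⟨chainCost p (y :: ([] ++ [y'])), [], by simp, rfl⟩ ?_
  rintro c ⟨l, hl, rfl⟩
  exact key l hl y hy hne
end
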